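/- arXiv:1809.09043 — 2 statements merged into one kernel-verified Lean document; each statement's English description precedes it below -/
import Mathlib

section
/- Let f ∈ ℝ[X₁,…,Xₙ] with deg f ≤ 2d, and suppose f attains its global infimum on ℝⁿ. Let y be an optimal solution of the NDS relaxation (P_{2d,NDS}) (feasible with objective value equal to P*_{2d,NDS}), and suppose there exist N ∈ ℕ, points a₁,…,a_N in the real gradient variety V_f and λ₁,…,λ_N > 0 such that M_d(y) = Σᵢ λᵢ V_d(aᵢ)V_d(aᵢ)ᵀ. Then P* = P*_{2d,NDS} and each aᵢ is a global minimizer of f (f(aᵢ) = P* for all i). -/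
/-!
Reading the decomposition of `M_d(y)` entry by entry gives `y_α = Σᵢ λᵢ aᵢ^α` for all `|α| ≤ 2d`,
so `y_0 = 1` forces `Σᵢ λᵢ = 1` and `deg f ≤ 2d` gives `L_y(f) = Σᵢ λᵢ f(aᵢ)`.
The moment sequence of the Dirac measure at a critical point `x` of `f` is NDS-feasible, so
`P*_{2d,NDS} ≤ f(x)`; this applies to every `aᵢ` and to a global minimizer of `f`.
Thus `L_y(f) = P*_{2d,NDS}` is a convex combination of the `f(aᵢ)` bounded by each of them,
so all `f(aᵢ)` equal it, and `P* ≤ f(aᵢ) = P*_{2d,NDS} ≤ P*`.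
-/

open MvPolynomial Matrix

noncomputable section

/-- `Idx n d` is the set `N_d` of exponent multi-indices `α ∈ ℕⁿ` with `|α| ≤ d`. -/
abbrev Idx (n d : ℕ) := {α : Fin n →₀ ℕ // (∑ i, α i) ≤ d}

instance idxFintype (n d : ℕ) : Fintype (Idx n d) :=
  Fintype.ofInjective
    (fun a => (fun i => (⟨a.1 i, Nat.lt_succ_of_le
        (le_trans (Finset.single_le_sum (fun _ _ => Nat.zero_le _) (Finset.mem_univ i)) a.2)⟩ :
        Fin (d + 1))))
    (fun a b h => by
      apply Subtype.ext
      ext i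
      exact congrArg Fin.val (congrFun h i))

/-- The moment matrix `M_d(y)`, indexed by `N_d × N_d`, with entries `y_{α+β}`. -/
def momMat (n d : ℕ) (y : (Fin n →₀ ℕ) → ℝ) : Matrix (Idx n d) (Idx n d) ℝ :=
  Matrix.of fun a b => y (a.1 + b.1)

/-- The vector `V_d(x) = (x^α)_{α ∈ N_d}` of monomials of degree at most `d` at `x`. -/
def monoVec (n d : ℕ) (x : Fin n → ℝ) : Idx n d → ℝ :=
  fun a => ∏ i, x i ^ (a.1 i)

/-- The Riesz functional `L_y(h) = Σ_α h_α y_α`. -/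
def riesz {n : ℕ} (y : (Fin n →₀ ℕ) → ℝ) (h : MvPolynomial (Fin n) ℝ) : ℝ :=
  ∑ α ∈ h.support, h.coeff α * y α

/-- Feasibility for the moment relaxation `(P_k)` : `y_0 = 1` and `M_{⌊k/2⌋}(y) ⪰ 0`. -/
def momFeasible (n k : ℕ) (y : (Fin n →₀ ℕ) → ℝ) : Prop :=
  y 0 = 1 ∧ (momMat n (k / 2) y).PosSemidef

/-- `P*_k`, the optimal value of the moment relaxation `(P_k)`. -/
def momOpt (n k : ℕ) (f : MvPolynomial (Fin n) ℝ) : EReal :=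
  sInf {v : EReal | ∃ y, momFeasible n k y ∧ v = (riesz y f : ℝ)}

/-- `P*`, the global infimum of `f` on `ℝⁿ`. -/
def globalOpt (n : ℕ) (f : MvPolynomial (Fin n) ℝ) : EReal :=
  sInf {v : EReal | ∃ x : Fin n → ℝ, v = (eval x f : ℝ)}

/-- Feasibility for the NDS (gradient) relaxation `(P_{k,NDS})` : `y_0 = 1`,
`M_{⌊k/2⌋}(y) ⪰ 0`, and `L_y(g·∂f/∂Xᵢ) = 0` for all admissible `g` and all `i`. -/
def ndsFeasible (n k : ℕ) (f : MvPolynomial (Fin n) ℝ) (y : (Fin n →₀ ℕ) → ℝ) : Prop :=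
  y 0 = 1 ∧ (momMat n (k / 2) y).PosSemidef ∧
    ∀ i : Fin n, ∀ g : MvPolynomial (Fin n) ℝ,
      (g * pderiv i f).totalDegree ≤ k → riesz y (g * pderiv i f) = 0

/-- `P*_{k,NDS}`, the optimal value of the NDS relaxation. -/
def ndsOpt (n k : ℕ) (f : MvPolynomial (Fin n) ℝ) : EReal :=
  sInf {v : EReal | ∃ y, ndsFeasible n k f y ∧ v = (riesz y f : ℝ)}

lemma eq_of_sum_mul_eq_of_forall_le {ι : Type*} [Fintype ι] {w v : ι → ℝ} {c : ℝ}
    (hw : ∀ i, 0 < w i) (hmass : ∑ i, w i = 1) (hmean : ∑ i, w i * v i = c)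
    (hle : ∀ i, c ≤ v i) (i : ι) : v i = c := by
  have hzero : ∑ j, w j * (v j - c) = 0 := by
    simp only [mul_sub, Finset.sum_sub_distrib, ← Finset.sum_mul, hmass, hmean]
    ring
  have hterm := (Finset.sum_eq_zero_iff_of_nonneg fun j _ =>
    mul_nonneg (hw j).le (sub_nonneg.mpr (hle j))).mp hzero i (Finset.mem_univ i)
  linarith [(mul_eq_zero.mp hterm).resolve_left (hw i).ne']

lemma Finsupp.exists_add_eq_degree_le_of_degree_le_two_mul {σ : Type*} {α : σ →₀ ℕ} {d : ℕ}
    (hα : α.degree ≤ 2 * d) : ∃ β γ, β + γ = α ∧ β.degree ≤ d ∧ γ.degree ≤ d := by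
  obtain ⟨β, hβ, hβd⟩ := Finsupp.exists_le_degree_eq α (min α.degree d) (min_le_left _ _)
  obtain ⟨γ, rfl⟩ := le_iff_exists_add.mp hβ
  rw [map_add] at hα hβd
  exact ⟨β, γ, rfl, by omega, by omega⟩

section Calculus

variable {n : ℕ}

lemma hasDerivAt_eval_update (f : MvPolynomial (Fin n) ℝ) (x : Fin n → ℝ) (j : Fin n) (t : ℝ) :
    HasDerivAt (fun s => eval (Function.update x j s) f)
      (eval (Function.update x j t) (pderiv j f)) t := by
  induction f using MvPolynomial.induction_on with
  | C c => simpa using hasDerivAt_const t c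
  | add p q hp hq => simp only [map_add]; exact hp.add hq
  | mul_X p i hp =>
    have hXi : HasDerivAt (fun s => Function.update x j s i) ((Pi.single j 1 : Fin n → ℝ) i) t :=
      hasDerivAt_pi.mp (hasDerivAt_update x j t) i
    have hfun : (fun s => eval (Function.update x j s) (p * X i)) =
        fun s => eval (Function.update x j s) p * Function.update x j s i := by
      ext s; simp
    rw [hfun]
    refine (hp.mul hXi).congr_deriv ?_
    rw [Derivation.leibniz, pderiv_X]
    rcases eq_or_ne i j with rfl | hij <;> simp [*, mul_comm, add_comm]

lemma eval_pderiv_eq_zero_of_isLocalMin {f : MvPolynomial (Fin n) ℝ} {x : Fin n → ℝ}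
    (hx : IsLocalMin (fun z => eval z f) x) (j : Fin n) : eval x (pderiv j f) = 0 := by
  have hcont : ContinuousAt (Function.update x j) (x j) :=
    (continuous_const.update j continuous_id).continuousAt
  have hmin : IsLocalMin (fun s => eval (Function.update x j s) f) (x j) :=
    IsLocalMin.comp_continuous (f := fun z => eval z f) (by rwa [Function.update_eq_self]) hcont
  simpa using hmin.hasDerivAt_eq_zero (hasDerivAt_eval_update f x j (x j))

end Calculus

section Moments

variable {n : ℕ}

def diracMoments (x : Fin n → ℝ) : (Fin n →₀ ℕ) → ℝ := fun α => ∏ i, x i ^ α i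

lemma riesz_diracMoments (x : Fin n → ℝ) (h : MvPolynomial (Fin n) ℝ) :
    riesz (diracMoments x) h = eval x h := by
  rw [eval_eq']; rfl

lemma momMat_diracMoments (d : ℕ) (x : Fin n → ℝ) :
    momMat n d (diracMoments x) = vecMulVec (monoVec n d x) (monoVec n d x) := by
  ext a b
  simp only [momMat, of_apply, diracMoments, vecMulVec_apply, monoVec, Finsupp.add_apply, pow_add,
    Finset.prod_mul_distrib]

lemma ndsFeasible_diracMoments (k : ℕ) {f : MvPolynomial (Fin n) ℝ} {x : Fin n → ℝ}
    (hx : ∀ j, eval x (pderiv j f) = 0) : ndsFeasible n k f (diracMoments x) := by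
  refine ⟨by simp [diracMoments], ?_, fun i g _ => ?_⟩
  · simpa [momMat_diracMoments] using posSemidef_vecMulVec_self_star (monoVec n (k / 2) x)
  · rw [riesz_diracMoments, eval_mul, hx i, mul_zero]

lemma ndsOpt_le_eval (k : ℕ) {f : MvPolynomial (Fin n) ℝ} {x : Fin n → ℝ}
    (hx : ∀ j, eval x (pderiv j f) = 0) : ndsOpt n k f ≤ ((eval x f : ℝ) : EReal) :=
  sInf_le ⟨diracMoments x, ndsFeasible_diracMoments k hx, by rw [riesz_diracMoments]⟩

lemma riesz_eq_sum_of_forall_mem_support {ι : Type*} [Fintype ι] {y : (Fin n →₀ ℕ) → ℝ}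
    {h : MvPolynomial (Fin n) ℝ} (w : ι → ℝ) (z : ι → (Fin n →₀ ℕ) → ℝ)
    (hy : ∀ α ∈ h.support, y α = ∑ i, w i * z i α) :
    riesz y h = ∑ i, w i * riesz (z i) h := by
  simp only [riesz, Finset.mul_sum]
  rw [Finset.sum_comm]
  refine Finset.sum_congr rfl fun α hα => ?_
  rw [hy α hα, Finset.mul_sum]
  exact Finset.sum_congr rfl fun i _ => by ring

variable {ι : Type*} [Fintype ι] {d : ℕ} {y : (Fin n →₀ ℕ) → ℝ} {a : ι → Fin n → ℝ} {w : ι → ℝ}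

lemma apply_eq_sum_diracMoments_of_momMat_eq
    (hM : momMat n d y = ∑ i, w i • vecMulVec (monoVec n d (a i)) (monoVec n d (a i)))
    {α : Fin n →₀ ℕ} (hα : α.degree ≤ 2 * d) : y α = ∑ i, w i * diracMoments (a i) α := by
  obtain ⟨β, γ, rfl, hβ, hγ⟩ := Finsupp.exists_add_eq_degree_le_of_degree_le_two_mul hα
  rw [Finsupp.degree_eq_sum] at hβ hγ
  simp_rw [← momMat_diracMoments] at hM
  simpa [momMat, Matrix.sum_apply] using congrFun₂ hM ⟨β, hβ⟩ ⟨γ, hγ⟩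

lemma riesz_eq_sum_eval_of_momMat_eq
    (hM : momMat n d y = ∑ i, w i • vecMulVec (monoVec n d (a i)) (monoVec n d (a i)))
    {f : MvPolynomial (Fin n) ℝ} (hf : f.totalDegree ≤ 2 * d) :
    riesz y f = ∑ i, w i * eval (a i) f := by
  simp_rw [← riesz_diracMoments]
  exact riesz_eq_sum_of_forall_mem_support w _ fun α hα =>
    apply_eq_sum_diracMoments_of_momMat_eq hM ((le_totalDegree hα).trans hf)

end Moments

lemma globalOpt_le_eval {n : ℕ} (f : MvPolynomial (Fin n) ℝ) (x : Fin n → ℝ) :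
    globalOpt n f ≤ ((eval x f : ℝ) : EReal) :=
  sInf_le ⟨x, rfl⟩

/-- suppose `f` attains its global infimum, `y` is an optimal solution of the
NDS relaxation `(P_{2d,NDS})`, and `M_d(y) = Σᵢ λᵢ V_d(aᵢ)V_d(aᵢ)ᵀ` with `λᵢ > 0` and all
`aᵢ` in the real gradient variety `V_f`.  Then `P* = P*_{2d,NDS}` and every `aᵢ` is a global
minimizer of `f`. -/
theorem nds_optimality_from_decomposition (n d : ℕ) (f : MvPolynomial (Fin n) ℝ)
    (hf : f.totalDegree ≤ 2 * d)
    (hattain : ∃ xs : Fin n → ℝ, ((eval xs f : ℝ) : EReal) = globalOpt n f)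
    (y : (Fin n →₀ ℕ) → ℝ) (hfeas : ndsFeasible n (2 * d) f y)
    (hopt : ((riesz y f : ℝ) : EReal) = ndsOpt n (2 * d) f)
    (N : ℕ) (a : Fin N → (Fin n → ℝ))
    (ha : ∀ i, ∀ j : Fin n, eval (a i) (pderiv j f) = 0)
    (lam : Fin N → ℝ) (hlam : ∀ i, 0 < lam i)
    (hM : momMat n d y =
      ∑ i, lam i • Matrix.vecMulVec (monoVec n d (a i)) (monoVec n d (a i))) :
    globalOpt n f = ndsOpt n (2 * d) f ∧
    ∀ i, ((eval (a i) f : ℝ) : EReal) = globalOpt n f := by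
  have hmass : ∑ i, lam i = 1 := by
    simpa [hfeas.1, diracMoments] using
      (apply_eq_sum_diracMoments_of_momMat_eq hM (α := 0) (by simp)).symm
  have hle : ∀ i, riesz y f ≤ eval (a i) f := fun i =>
    EReal.coe_le_coe_iff.mp (hopt ▸ ndsOpt_le_eval (2 * d) (ha i))
  have hatoms : ∀ i, eval (a i) f = riesz y f := eq_of_sum_mul_eq_of_forall_le hlam hmass
    (riesz_eq_sum_eval_of_momMat_eq hM hf).symm hle
  obtain ⟨xs, hxs⟩ := hattain
  have hxs_min : IsLocalMin (fun z => eval z f) xs := .of_forall fun z =>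
    EReal.coe_le_coe_iff.mp (hxs ▸ globalOpt_le_eval f z)
  obtain ⟨i₀, -⟩ := Finset.nonempty_of_sum_ne_zero (hmass ▸ one_ne_zero)
  have hvalue : globalOpt n f = ndsOpt n (2 * d) f := le_antisymm
    (by simpa [hatoms, hopt] using globalOpt_le_eval f (a i₀))
    (hxs ▸ ndsOpt_le_eval (2 * d) (eval_pderiv_eq_zero_of_isLocalMin hxs_min))
  exact ⟨hvalue, fun i => by rw [hatoms, hopt, hvalue]⟩
end
end

section
/- Let f ∈ ℝ[X₁,…,Xₙ] with deg f ≤ 2d−1, d ≥ 1, suppose f attains its global infimum on ℝⁿ, and let y be an optimal solution of the NDS relaxation (P_{2d,NDS}). Write M_d(y) in block form [A, B; Bᵀ, C] with A = M_{d-1}(y), choose W with B = AW, and suppose the modified moment matrix M̃ := [A, B; Bᵀ, WᵀAW] is a generalized Hankel matrix. Then there exist N ∈ ℕ, λ₁,…,λ_N > 0 and a₁,…,a_N ∈ ℝⁿ such that M̃ = Σᵢ λᵢ V_d(aᵢ)V_d(aᵢ)ᵀ. If moreover a₁,…,a_N all lie in the real gradient variety V_f, then P* = P*_{2d,NDS}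 and each aᵢ is a global minimizer of f. -/
open MvPolynomial Matrix

noncomputable section

/-- `HIdx n d` is the set of exponent multi-indices `α ∈ ℕⁿ` with `|α| = d`. -/
abbrev HIdx (n d : ℕ) := {α : Fin n →₀ ℕ // (∑ i, α i) = d}

instance hIdxFintype (n d : ℕ) : Fintype (HIdx n d) :=
  Fintype.ofInjective (fun a => (⟨a.1, le_of_eq a.2⟩ : Idx n d))
    (fun a b h => by
      have h' := congrArg (fun z : Idx n d => z.1) h
      exact Subtype.ext h')

/-- The exponent multi-index attached to a block index of `N_d = N_{d-1} ⊔ {|α| = d}`. -/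
def bDeg (n d e : ℕ) : Idx n d ⊕ HIdx n e → (Fin n →₀ ℕ) :=
  Sum.elim Subtype.val Subtype.val

open Finset RealInnerProductSpace

/-- index of `N_d = N_{d-1} ⊔ {|α| = d}` attached to a multi-index of degree at most `d`. -/
def idxT (n d : ℕ) (α : Fin n →₀ ℕ) (h : (∑ i, α i) ≤ d) : Idx n (d - 1) ⊕ HIdx n d :=
  if h' : (∑ i, α i) ≤ d - 1 then Sum.inl ⟨α, h'⟩ else Sum.inr ⟨α, by omega⟩

lemma bDeg_idxT (n d : ℕ) (α : Fin n →₀ ℕ) (h : (∑ i, α i) ≤ d) :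
    bDeg n (d - 1) d (idxT n d α h) = α := by
  unfold idxT
  split <;> rfl

lemma sum_bDeg_le (n d : ℕ) (t : Idx n (d - 1) ⊕ HIdx n d) :
    (∑ i, bDeg n (d - 1) d t i) ≤ d := by
  cases t with
  | inl a => exact le_trans a.2 (by omega)
  | inr a => exact le_of_eq a.2

lemma idxT_bDeg (n d : ℕ) (hd : 1 ≤ d) (t : Idx n (d - 1) ⊕ HIdx n d) :
    idxT n d (bDeg n (d - 1) d t) (sum_bDeg_le n d t) = t := by
  cases t with
  | inl a =>
    unfold idxT
    simp only [bDeg, Sum.elim_inl]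
    exact dif_pos a.2
  | inr a =>
    unfold idxT
    simp only [bDeg, Sum.elim_inr]
    exact dif_neg (show ¬ (∑ i, a.1 i ≤ d - 1) by have := a.2; omega)

lemma sum_single_one {n : ℕ} (i : Fin n) : (∑ j, (Finsupp.single i 1 : Fin n →₀ ℕ) j) = 1 := by
  simp [Finsupp.single_apply]

lemma prod_pow_single {n : ℕ} (x : Fin n → ℝ) (i : Fin n) :
    (∏ j, x j ^ (Finsupp.single i 1 : Fin n →₀ ℕ) j) = x i := by
  calc (∏ j, x j ^ (Finsupp.single i 1 : Fin n →₀ ℕ) j)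
      = ∏ j, (if i = j then x j else 1) := by
        refine Finset.prod_congr rfl fun j _ => ?_
        rw [Finsupp.single_apply]
        split <;> simp
    _ = x i := by rw [Finset.prod_ite_eq]; simp

section LinC
variable {I : Type*} [Fintype I] {V : Type*}

def linC [AddCommMonoid V] [Module ℝ V] (v : I → V) (c : I → ℝ) : V := ∑ β, c β • v β

variable [AddCommGroup V] [Module ℝ V]

lemma linC_add (v : I → V) (c c' : I → ℝ) : linC v (c + c') = linC v c + linC v c' := by
  simp [linC, add_smul, Finset.sum_add_distrib]

lemma linC_sub (v : I → V) (c c' : I → ℝ) : linC v (c - c') = linC v c - linC v c' := by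
  simp [linC, sub_smul, Finset.sum_sub_distrib]

lemma linC_smul (v : I → V) (r : ℝ) (c : I → ℝ) : linC v (r • c) = r • linC v c := by
  simp [linC, Finset.smul_sum, smul_smul]

lemma linC_single [DecidableEq I] (v : I → V) (β : I) : linC v (Pi.single β 1) = v β := by
  rw [linC, Finset.sum_eq_single β]
  · simp
  · intro b _ hb; simp [Pi.single_apply, hb]
  · intro h; exact absurd (Finset.mem_univ β) h

end LinC

section InnerLinC
variable {E : Type*} [NormedAddCommGroup E] [InnerProductSpace ℝ E]
  {I J : Type*} [Fintype I] [Fintype J]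

lemma inner_linC (v : I → E) (w : J → E) (c : I → ℝ) (c' : J → ℝ) :
    ⟪linC v c, linC w c'⟫ = ∑ β, ∑ β', c β * c' β' * ⟪v β, w β'⟫ := by
  rw [linC, linC, sum_inner]
  refine Finset.sum_congr rfl fun β _ => ?_
  rw [real_inner_smul_left, inner_sum, Finset.mul_sum]
  refine Finset.sum_congr rfl fun β' _ => ?_
  rw [real_inner_smul_right]; ring

lemma inner_linC_right (x : E) (w : J → E) (c' : J → ℝ) :
    ⟪x, linC w c'⟫ = ∑ β', c' β' * ⟪x, w β'⟫ := by
  rw [linC, inner_sum]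
  exact Finset.sum_congr rfl fun β' _ => real_inner_smul_right _ _ _

lemma inner_linC_left (w : J → E) (c' : J → ℝ) (x : E) :
    ⟪linC w c', x⟫ = ∑ β', c' β' * ⟪w β', x⟫ := by
  rw [linC, sum_inner]
  exact Finset.sum_congr rfl fun β' _ => real_inner_smul_left _ _ _

end InnerLinC

open scoped MatrixOrder in
set_option maxHeartbeats 1000000 in
theorem flat_decomp (n d : ℕ) (hd : 1 ≤ d) (y : (Fin n →₀ ℕ) → ℝ)
    (hA : (momMat n (d - 1) y).PosSemidef)
    (B W : Matrix (Idx n (d - 1)) (HIdx n d) ℝ)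
    (hW : B = momMat n (d - 1) y * W)
    (Mt : Matrix (Idx n (d - 1) ⊕ HIdx n d) (Idx n (d - 1) ⊕ HIdx n d) ℝ)
    (hMt : Mt = Matrix.fromBlocks (momMat n (d - 1) y) B Bᵀ (Wᵀ * momMat n (d - 1) y * W))
    (hHankel : ∀ a b a' b' : Idx n (d - 1) ⊕ HIdx n d,
      bDeg n (d - 1) d a + bDeg n (d - 1) d b = bDeg n (d - 1) d a' + bDeg n (d - 1) d b' →
      Mt a b = Mt a' b') :
    ∃ (N : ℕ) (lam : Fin N → ℝ) (a : Fin N → (Fin n → ℝ)),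
      (∀ i, 0 < lam i) ∧
      Mt = ∑ i, lam i • Matrix.vecMulVec
          (fun b => ∏ j, a i j ^ (bDeg n (d - 1) d b) j)
          (fun b => ∏ j, a i j ^ (bDeg n (d - 1) d b) j) := by
  classical
  set A := momMat n (d - 1) y with hAdef
  have hAsymm : Aᵀ = A := by
    ext a b
    simp [hAdef, momMat, Matrix.transpose_apply, add_comm]
  have hBT : Bᵀ = Wᵀ * A := by
    rw [hW, Matrix.transpose_mul, hAsymm]
  -- Mt = Pᵀ A P for P = [1 W]
  have hMtPAP : Mt = (Matrix.fromCols (1 : Matrix (Idx n (d-1)) (Idx n (d-1)) ℝ) W)ᴴ *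
      A * (Matrix.fromCols 1 W) := by
    have hH : (Matrix.fromCols (1 : Matrix (Idx n (d-1)) (Idx n (d-1)) ℝ) W)ᴴ
        = (Matrix.fromCols (1 : Matrix (Idx n (d-1)) (Idx n (d-1)) ℝ) W)ᵀ := by
      ext i j; simp [Matrix.conjTranspose_apply]
    rw [hH, Matrix.transpose_fromCols, Matrix.mul_assoc, Matrix.mul_fromCols,
      Matrix.fromRows_mul_fromCols]
    rw [hMt, hBT, hW]
    rw [Matrix.mul_one, Matrix.transpose_one]
    simp only [Matrix.one_mul, Matrix.mul_assoc]
  have hPSD : Mt.PosSemidef := by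
    rw [hMtPAP]
    exact hA.conjTranspose_mul_mul_same _
  -- Gram vectors
  set S := CFC.sqrt Mt with hSdef
  have hSS : S * S = Mt := CFC.sqrt_mul_sqrt_self Mt hPSD.nonneg
  have hSsym : ∀ i j, S i j = S j i := by
    intro i j
    have h2 := congrFun (congrFun (CFC.sqrt_nonneg Mt).posSemidef.1 i) j
    simpa [Matrix.conjTranspose_apply] using h2.symm
  set u : (Idx n (d - 1) ⊕ HIdx n d) → EuclideanSpace ℝ (Idx n (d - 1) ⊕ HIdx n d) :=
    fun t => WithLp.toLp 2 (fun j => S j t) with hudef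
  have gram : ∀ s t, ⟪u s, u t⟫ = Mt s t := by
    intro s t
    have h1 : ⟪u s, u t⟫ = ∑ j, S j s * S j t := by
      simp [hudef, PiLp.inner_apply, RCLike.inner_apply, mul_comm]
    rw [h1, ← hSS, Matrix.mul_apply]
    exact Finset.sum_congr rfl fun j _ => by rw [hSsym j s]
  set E := Submodule.span ℝ (Set.range u) with hEdef
  have hu_mem : ∀ t, u t ∈ E := fun t => Submodule.subset_span ⟨t, rfl⟩
  -- flatness : the columns of the second block are combinations of the first block
  have hcol : ∀ (γ : HIdx n d) t, Mt t (Sum.inr γ) = ∑ β, W β γ * Mt t (Sum.inl β) := by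
    intro γ t
    cases t with
    | inl α =>
      rw [hMt]
      simp only [Matrix.fromBlocks_apply₁₂, Matrix.fromBlocks_apply₁₁]
      rw [hW, Matrix.mul_apply]
      exact Finset.sum_congr rfl fun β _ => mul_comm _ _
    | inr δ =>
      rw [hMt]
      simp only [Matrix.fromBlocks_apply₂₂, Matrix.fromBlocks_apply₂₁]
      rw [hBT, Matrix.mul_apply]
      exact Finset.sum_congr rfl fun β _ => mul_comm _ _
  have hu_inr : ∀ γ : HIdx n d, u (Sum.inr γ) = linC (fun β => u (Sum.inl β)) (fun β => W β γ) := by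
    intro γ
    have hw : ∀ t, ⟪u t, u (Sum.inr γ) - linC (fun β => u (Sum.inl β)) (fun β => W β γ)⟫ = 0 := by
      intro t
      rw [inner_sub_right, inner_linC_right, gram, hcol γ t]
      rw [sub_eq_zero]
      exact Finset.sum_congr rfl fun β _ => by rw [gram]
    have hself : ⟪u (Sum.inr γ) - linC (fun β => u (Sum.inl β)) (fun β => W β γ),
        u (Sum.inr γ) - linC (fun β => u (Sum.inl β)) (fun β => W β γ)⟫ = 0 := by
      rw [inner_sub_left, hw, inner_linC_left]
      simp only [hw, mul_zero, Finset.sum_const_zero, zero_sub, neg_zero]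
    have := inner_self_eq_zero.mp hself
    rw [sub_eq_zero] at this
    exact this
  -- representation of elements of E
  have hrepr : ∀ x ∈ E, ∃ c : Idx n (d - 1) → ℝ, linC (fun β => u (Sum.inl β)) c = x := by
    intro x hx
    refine Submodule.span_induction (p := fun x _ => ∃ c, linC (fun β => u (Sum.inl β)) c = x)
      ?_ ?_ ?_ ?_ hx
    · rintro _ ⟨t, rfl⟩
      cases t with
      | inl β => exact ⟨Pi.single β 1, linC_single _ β⟩
      | inr γ => exact ⟨fun β => W β γ, (hu_inr γ).symm⟩
    · exact ⟨0, by simp [linC]⟩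
    · rintro x' y - - ⟨c, hc⟩ ⟨c', hc'⟩
      exact ⟨c + c', by rw [linC_add, hc, hc']⟩
    · rintro r x' - ⟨c, hc⟩
      exact ⟨r • c, by rw [linC_smul, hc]⟩
  -- the shift maps
  have hτle : ∀ (i : Fin n) (β : Idx n (d - 1)),
      (∑ j, (β.1 + Finsupp.single i 1 : Fin n →₀ ℕ) j) ≤ d := by
    intro i β
    have h1 := β.2
    have h2 : (∑ j, (β.1 + Finsupp.single i 1 : Fin n →₀ ℕ) j) = (∑ j, β.1 j) + 1 := by
      simp only [Finsupp.add_apply, Finset.sum_add_distrib, _root_.sum_single_one]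
    omega
  set τ : Fin n → Idx n (d - 1) → (Idx n (d - 1) ⊕ HIdx n d) :=
    fun i β => idxT n d (β.1 + Finsupp.single i 1) (hτle i β) with hτdef
  have hdegτ : ∀ i β, bDeg n (d - 1) d (τ i β) = β.1 + Finsupp.single i 1 :=
    fun i β => bDeg_idxT n d _ _
  have hΨmem : ∀ (i : Fin n) (c : Idx n (d - 1) → ℝ), linC (fun β => u (τ i β)) c ∈ E :=
    fun i c => Submodule.sum_mem _ fun β _ => Submodule.smul_mem _ _ (hu_mem _)
  have hshift : ∀ (i : Fin n) (β β' : Idx n (d - 1)),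
      Mt (τ i β) (Sum.inl β') = Mt (Sum.inl β) (τ i β') := by
    intro i β β'
    apply hHankel
    rw [hdegτ, hdegτ]
    simp only [bDeg, Sum.elim_inl]
    rw [add_assoc, add_comm (Finsupp.single i 1)]
  have hshift2 : ∀ (i j : Fin n) (β β' : Idx n (d - 1)),
      Mt (τ j β) (τ i β') = Mt (τ i β) (τ j β') := by
    intro i j β β'
    apply hHankel
    rw [hdegτ, hdegτ, hdegτ, hdegτ]
    abel
  have hker : ∀ (i : Fin n) (c : Idx n (d - 1) → ℝ),
      linC (fun β => u (Sum.inl β)) c = 0 → linC (fun β => u (τ i β)) c = 0 := by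
    intro i c hc
    have h2 : ∀ β', ⟪linC (fun β => u (τ i β)) c, u (Sum.inl β')⟫ = 0 := by
      intro β'
      rw [inner_linC_left]
      calc ∑ β, c β * ⟪u (τ i β), u (Sum.inl β')⟫
          = ∑ β, c β * ⟪u (Sum.inl β), u (τ i β')⟫ :=
            Finset.sum_congr rfl fun β _ => by rw [gram, gram, hshift]
        _ = ⟪linC (fun β => u (Sum.inl β)) c, u (τ i β')⟫ := (inner_linC_left _ _ _).symm
        _ = 0 := by rw [hc, inner_zero_left]
    have h3 : ∀ x ∈ E, ⟪linC (fun β => u (τ i β)) c, x⟫ = 0 := by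
      intro x hx
      refine Submodule.span_induction
        (p := fun x _ => ⟪linC (fun β => u (τ i β)) c, x⟫ = 0) ?_ ?_ ?_ ?_ hx
      · rintro _ ⟨t, rfl⟩
        cases t with
        | inl β' => exact h2 β'
        | inr γ =>
          rw [hu_inr γ, inner_linC_right]
          simp [h2]
      · simp
      · intro x' y' _ _ hx' hy'; rw [inner_add_right, hx', hy', add_zero]
      · intro r x' _ hx'; rw [real_inner_smul_right, hx', mul_zero]
    exact inner_self_eq_zero.mp (h3 _ (hΨmem i c))
  have hΨeq : ∀ (i : Fin n) c c', linC (fun β => u (Sum.inl β)) c = linC (fun β => u (Sum.inl β)) c' →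
      linC (fun β => u (τ i β)) c = linC (fun β => u (τ i β)) c' := by
    intro i c c' h
    have := hker i (c - c') (by rw [linC_sub, h, sub_self])
    rw [linC_sub, sub_eq_zero] at this
    exact this
  choose rep hrep using hrepr
  -- the multiplication operators
  let Xf : Fin n → E → E := fun i e =>
    ⟨linC (fun β => u (τ i β)) (rep e.1 e.2), hΨmem i _⟩
  have hXf : ∀ (i : Fin n) (e : E) (c), linC (fun β => u (Sum.inl β)) c = e.1 →
      (Xf i e).1 = linC (fun β => u (τ i β)) c := by
    intro i e c hc
    exact hΨeq i _ c (by rw [hrep e.1 e.2, hc])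
  have hXfadd : ∀ (i : Fin n) (e e' : E), Xf i (e + e') = Xf i e + Xf i e' := by
    intro i e e'
    apply Subtype.ext
    have h1 : (Xf i (e + e')).1 = linC (fun β => u (τ i β)) (rep e.1 e.2 + rep e'.1 e'.2) := by
      apply hXf
      rw [linC_add, hrep, hrep]
      rfl
    rw [h1, linC_add]
    rfl
  have hXfsmul : ∀ (i : Fin n) (r : ℝ) (e : E), Xf i (r • e) = r • Xf i e := by
    intro i r e
    apply Subtype.ext
    have h1 : (Xf i (r • e)).1 = linC (fun β => u (τ i β)) (r • rep e.1 e.2) := by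
      apply hXf
      rw [linC_smul, hrep]
      rfl
    rw [h1, linC_smul]
    rfl
  let X : Fin n → E →ₗ[ℝ] E := fun i =>
    { toFun := Xf i, map_add' := hXfadd i, map_smul' := hXfsmul i }
  have hXcoe : ∀ (i : Fin n) (e : E), (X i e).1 = linC (fun β => u (τ i β)) (rep e.1 e.2) := by
    intro i e; rfl
  have hXu : ∀ (i : Fin n) (β : Idx n (d - 1)) (h : u (Sum.inl β) ∈ E),
      (X i ⟨u (Sum.inl β), h⟩).1 = u (τ i β) := by
    intro i β h
    show (Xf i ⟨u (Sum.inl β), h⟩).1 = u (τ i β)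
    rw [hXf i ⟨u (Sum.inl β), h⟩ (Pi.single β 1) (by rw [linC_single]), linC_single]
  have hinner_lin : ∀ (g h : Idx n (d - 1) → (Idx n (d - 1) ⊕ HIdx n d)) (c c' : Idx n (d - 1) → ℝ),
      ⟪linC (fun β => u (g β)) c, linC (fun β => u (h β)) c'⟫
        = ∑ β, ∑ β', c β * c' β' * Mt (g β) (h β') := by
    intro g h c c'
    rw [inner_linC]
    exact Finset.sum_congr rfl fun β _ => Finset.sum_congr rfl fun β' _ => by rw [gram]
  have hsymX : ∀ i : Fin n, (X i).IsSymmetric := by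
    intro i e e'
    rw [Submodule.coe_inner, Submodule.coe_inner, hXcoe, hXcoe]
    calc ⟪linC (fun β => u (τ i β)) (rep e.1 e.2), e'.1⟫
        = ⟪linC (fun β => u (τ i β)) (rep e.1 e.2),
            linC (fun β => u (Sum.inl β)) (rep e'.1 e'.2)⟫ := by rw [hrep e'.1 e'.2]
      _ = ∑ β, ∑ β', rep e.1 e.2 β * rep e'.1 e'.2 β' * Mt (τ i β) (Sum.inl β') :=
          hinner_lin _ _ _ _
      _ = ∑ β, ∑ β', rep e.1 e.2 β * rep e'.1 e'.2 β' * Mt (Sum.inl β) (τ i β') :=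
          Finset.sum_congr rfl fun β _ => Finset.sum_congr rfl fun β' _ => by rw [hshift]
      _ = ⟪linC (fun β => u (Sum.inl β)) (rep e.1 e.2),
            linC (fun β => u (τ i β)) (rep e'.1 e'.2)⟫ := (hinner_lin _ _ _ _).symm
      _ = ⟪e.1, linC (fun β => u (τ i β)) (rep e'.1 e'.2)⟫ := by rw [hrep e.1 e.2]
  have hcomm : ∀ i j : Fin n, Commute (X i) (X j) := by
    intro i j
    apply LinearMap.ext
    intro e
    apply ext_inner_right ℝ
    intro v
    rw [Module.End.mul_apply, Module.End.mul_apply]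
    rw [hsymX i (X j e) v, hsymX j (X i e) v]
    rw [Submodule.coe_inner, Submodule.coe_inner, hXcoe, hXcoe, hXcoe, hXcoe]
    calc ⟪linC (fun β => u (τ j β)) (rep e.1 e.2), linC (fun β => u (τ i β)) (rep v.1 v.2)⟫
        = ∑ β, ∑ β', rep e.1 e.2 β * rep v.1 v.2 β' * Mt (τ j β) (τ i β') := hinner_lin _ _ _ _
      _ = ∑ β, ∑ β', rep e.1 e.2 β * rep v.1 v.2 β' * Mt (τ i β) (τ j β') :=
          Finset.sum_congr rfl fun β _ => Finset.sum_congr rfl fun β' _ => by rw [hshift2]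
      _ = ⟪linC (fun β => u (τ i β)) (rep e.1 e.2), linC (fun β => u (τ j β)) (rep v.1 v.2)⟫ :=
          (hinner_lin _ _ _ _).symm
  have htop := LinearMap.IsSymmetric.iSup_iInf_eq_top_of_commute hsymX (fun i j _ => hcomm i j)
  have ht0le : (∑ j, (0 : Fin n →₀ ℕ) j) ≤ d - 1 := by simp
  set t0 : Idx n (d - 1) ⊕ HIdx n d := Sum.inl ⟨0, ht0le⟩ with ht0def
  set u0 : E := ⟨u t0, hu_mem t0⟩ with hu0def
  have hmem : u0 ∈ ⨆ χ : Fin n → ℝ, ⨅ i, Module.End.eigenspace (X i) (χ i) := by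
    rw [htop]; exact Submodule.mem_top
  obtain ⟨F, hF1, hF2⟩ := (Submodule.mem_iSup_iff_exists_finsupp _ _).mp hmem
  set N := F.support.card with hNdef
  set en := F.support.equivFin with hendef
  set a : Fin N → (Fin n → ℝ) := fun k => (en.symm k : Fin n → ℝ) with hadef
  set w : Fin N → E := fun k => F (a k) with hwdef
  have hw : ∀ k i, X i (w k) = a k i • w k := by
    intro k i
    exact Module.End.mem_eigenspace_iff.mp ((Submodule.mem_iInf _).mp (hF1 (a k)) i)
  have hwne : ∀ k, w k ≠ 0 := by
    intro k
    exact Finsupp.mem_support_iff.mp (en.symm k).2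
  have hane : ∀ k l, k ≠ l → a k ≠ a l := by
    intro k l hkl hc
    exact hkl (en.symm.injective (Subtype.ext hc))
  have horth : ∀ k l, k ≠ l → ⟪w k, w l⟫ = 0 := by
    intro k l hkl
    obtain ⟨i, hi⟩ := Function.ne_iff.mp (hane k l hkl)
    have h1 := hsymX i (w k) (w l)
    rw [hw k i, hw l i, real_inner_smul_left (F := E), real_inner_smul_right (F := E)] at h1
    have h2 : (a k i - a l i) * ⟪w k, w l⟫ = 0 := by linear_combination h1
    rcases mul_eq_zero.mp h2 with h | h
    · exact absurd (sub_eq_zero.mp h) hi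
    · exact h
  have hsum0 : (∑ k, w k) = u0 := by
    rw [← hF2, Finsupp.sum, ← Finset.sum_coe_sort F.support (fun x => F x)]
    exact Equiv.sum_comp en.symm (fun x : {x // x ∈ F.support} => F x.1)
  have hexp : ∀ (m : ℕ) (α : Fin n →₀ ℕ) (_ : (∑ j, α j) = m) (hle : (∑ j, α j) ≤ d),
      (⟨u (idxT n d α hle), hu_mem _⟩ : E) = ∑ k, (∏ j, a k j ^ α j) • w k := by
    intro m
    induction m with
    | zero =>
      intro α hm hle
      have hα : α = 0 := by
        ext j
        exact Finset.sum_eq_zero_iff.mp hm j (Finset.mem_univ j)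
      subst hα
      have h1 : idxT n d 0 hle = t0 := by
        unfold idxT
        rw [dif_pos ht0le]
      have h2 : (⟨u (idxT n d 0 hle), hu_mem _⟩ : E) = u0 := Subtype.ext (by rw [h1])
      rw [h2, ← hsum0]
      refine Finset.sum_congr rfl fun k _ => ?_
      have h3 : (∏ j, a k j ^ (0 : Fin n →₀ ℕ) j) = 1 := by simp
      rw [h3, one_smul]
    | succ m ih =>
      intro α hm hle
      have hex : ∃ i, α i ≠ 0 := by
        by_contra hc
        push_neg at hc
        have : (∑ j, α j) = 0 := Finset.sum_eq_zero fun j _ => hc j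
        omega
      obtain ⟨i, hi⟩ := hex
      have hptw : ∀ j, (α - Finsupp.single i 1 : Fin n →₀ ℕ) j +
          (Finsupp.single i 1 : Fin n →₀ ℕ) j = α j := by
        intro j
        rw [Finsupp.tsub_apply, Finsupp.single_apply]
        by_cases h : i = j
        · subst h; simp; omega
        · simp [h]
      have hsum' : (∑ j, (α - Finsupp.single i 1 : Fin n →₀ ℕ) j) + 1 = ∑ j, α j := by
        have := Finset.sum_congr rfl (fun j (_ : j ∈ Finset.univ) => hptw j)
        rw [Finset.sum_add_distrib, _root_.sum_single_one] at this
        exact this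
      have hex2 : ∃ α' : Fin n →₀ ℕ, ∃ _ : (∑ j, α' j) ≤ d - 1, (∑ j, α' j) = m ∧
          α' + Finsupp.single i 1 = α := by
        refine ⟨α - Finsupp.single i 1, by omega, by omega, ?_⟩
        ext j
        rw [Finsupp.add_apply]
        exact hptw j
      obtain ⟨α', hle', hm', hαeq⟩ := hex2
      subst hαeq
      have h1 : idxT n d (α' + Finsupp.single i 1) hle = τ i ⟨α', hle'⟩ := rfl
      have h3 : idxT n d α' (le_trans hle' (Nat.sub_le d 1)) = Sum.inl ⟨α', hle'⟩ := by
        unfold idxT; rw [dif_pos hle']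
      have h4 := ih α' hm' (le_trans hle' (Nat.sub_le d 1))
      rw [h3] at h4
      have h5 : (⟨u (τ i ⟨α', hle'⟩), hu_mem _⟩ : E) =
          X i ⟨u (Sum.inl ⟨α', hle'⟩), hu_mem _⟩ :=
        (Subtype.ext (hXu i ⟨α', hle'⟩ _)).symm
      have h6 : (⟨u (idxT n d (α' + Finsupp.single i 1) hle), hu_mem _⟩ : E) =
          X i ⟨u (Sum.inl ⟨α', hle'⟩), hu_mem _⟩ := by rw [← h5, h1]
      rw [h6, h4, map_sum]
      refine Finset.sum_congr rfl fun k _ => ?_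
      rw [LinearMap.map_smul, hw k i, smul_smul]
      congr 1
      have h7 : ∀ j, a k j ^ ((α' + Finsupp.single i 1 : Fin n →₀ ℕ) j)
          = a k j ^ α' j * a k j ^ ((Finsupp.single i 1 : Fin n →₀ ℕ) j) := fun j => by
        rw [Finsupp.add_apply, pow_add]
      rw [Finset.prod_congr rfl fun j _ => h7 j, Finset.prod_mul_distrib, prod_pow_single]
  have huexp : ∀ t, (⟨u t, hu_mem t⟩ : E)
      = ∑ k, (∏ j, a k j ^ (bDeg n (d - 1) d t) j) • w k := by
    intro t
    have h := hexp (∑ j, (bDeg n (d - 1) d t) j) (bDeg n (d - 1) d t) rfl (sum_bDeg_le n d t)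
    rw [idxT_bDeg n d hd t] at h
    exact h
  refine ⟨N, fun k => ⟪w k, w k⟫, a, ?_, ?_⟩
  · intro k
    rcases lt_or_eq_of_le (real_inner_self_nonneg (x := w k)) with h | h
    · exact h
    · exact absurd (inner_self_eq_zero.mp h.symm) (hwne k)
  · ext s t
    have h1 : Mt s t = ⟪(⟨u s, hu_mem s⟩ : E), (⟨u t, hu_mem t⟩ : E)⟫ := by
      rw [Submodule.coe_inner, gram]
    rw [h1, huexp s, huexp t, sum_inner]
    have h2 : ∀ k, ⟪(∏ j, a k j ^ (bDeg n (d - 1) d s) j) • w k,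
        ∑ l, (∏ j, a l j ^ (bDeg n (d - 1) d t) j) • w l⟫
        = (∏ j, a k j ^ (bDeg n (d - 1) d s) j) *
            ((∏ j, a k j ^ (bDeg n (d - 1) d t) j) * ⟪w k, w k⟫) := by
      intro k
      rw [real_inner_smul_left (F := E)]
      congr 1
      rw [inner_sum, Finset.sum_eq_single k]
      · rw [real_inner_smul_right (F := E)]
      · intro l _ hlk
        rw [real_inner_smul_right (F := E), horth k l (Ne.symm hlk), mul_zero]
      · intro h; exact absurd (Finset.mem_univ k) h
    rw [Finset.sum_congr rfl fun k _ => h2 k, Matrix.sum_apply]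
    refine Finset.sum_congr rfl fun k _ => ?_
    rw [Matrix.smul_apply, Matrix.vecMulVec_apply, smul_eq_mul]
    ring

-- sub-multiindex of prescribed weight
lemma exists_le_sum_eq {n : ℕ} (α : Fin n →₀ ℕ) (k : ℕ) (hk : k ≤ ∑ i, α i) :
    ∃ β : Fin n →₀ ℕ, (∀ j, β j ≤ α j) ∧ (∑ i, β i) = k := by
  induction k with
  | zero => exact ⟨0, fun j => Nat.zero_le _, by simp⟩
  | succ m ih =>
    obtain ⟨β, hβle, hβsum⟩ := ih (le_of_lt (Nat.lt_of_lt_of_le (Nat.lt_succ_self m) hk))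
    have hlt : ∃ i, β i < α i := by
      by_contra hcon
      push_neg at hcon
      have : ∀ j, β j = α j := fun j => le_antisymm (hβle j) (hcon j)
      have : (∑ i, β i) = ∑ i, α i := Finset.sum_congr rfl fun j _ => this j
      omega
    obtain ⟨i, hi⟩ := hlt
    refine ⟨β + Finsupp.single i 1, fun j => ?_, ?_⟩
    · simp only [Finsupp.add_apply, Finsupp.single_apply]
      by_cases h : i = j
      · subst h; simp; omega
      · simp [h]; exact hβle j
    · have : (∑ j, (Finsupp.single i 1 : Fin n →₀ ℕ) j) = 1 := by
        simp [Finsupp.single_apply]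
      simp only [Finsupp.add_apply, Finset.sum_add_distrib]
      omega

lemma split_deg {n d : ℕ} (hd : 1 ≤ d) (α : Fin n →₀ ℕ) (h : (∑ i, α i) ≤ 2 * d - 1) :
    ∃ β γ : Fin n →₀ ℕ, (∑ i, β i) ≤ d - 1 ∧ (∑ i, γ i) ≤ d ∧ β + γ = α := by
  by_cases hc : (∑ i, α i) ≤ d
  · exact ⟨0, α, by simp, hc, by simp⟩
  · push_neg at hc
    obtain ⟨γ, hγle, hγsum⟩ := exists_le_sum_eq α d (le_of_lt hc)
    refine ⟨α - γ, γ, ?_, le_of_eq hγsum, ?_⟩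
    · have hsub : (∑ i, (α - γ) i) + (∑ i, γ i) = ∑ i, α i := by
        rw [← Finset.sum_add_distrib]
        exact Finset.sum_congr rfl fun j _ => by
          have := hγle j
          rw [Finsupp.tsub_apply]; omega
      omega
    · ext j
      simp only [Finsupp.add_apply, Finsupp.tsub_apply]
      have := hγle j
      omega

section Grad
variable {n : ℕ}

/-- evaluation of the univariate restriction -/
lemma eval_line (xs : Fin n → ℝ) (i : Fin n) (p : MvPolynomial (Fin n) ℝ) (t : ℝ) :
    Polynomial.eval t (aeval (fun j => Polynomial.C (xs j) +
        if j = i then Polynomial.X else 0) p)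
      = eval (fun j => xs j + if j = i then t else 0) p := by
  induction p using MvPolynomial.induction_on with
  | C a => simp
  | add p q hp hq => simp [hp, hq]
  | mul_X p j hp => by_cases h : j = i <;> simp [h, hp]

lemma derivative_line (xs : Fin n → ℝ) (i : Fin n) (p : MvPolynomial (Fin n) ℝ) :
    Polynomial.derivative (aeval (fun j => Polynomial.C (xs j) +
        if j = i then Polynomial.X else 0) p)
      = aeval (fun j => Polynomial.C (xs j) + if j = i then Polynomial.X else 0)
          (pderiv i p) := by
  induction p using MvPolynomial.induction_on with
  | C a => simp
  | add p q hp hq => simp [hp, hq]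
  | mul_X p j hp =>
    rw [_root_.map_mul, Polynomial.derivative_mul, pderiv_mul, map_add, _root_.map_mul, _root_.map_mul, hp]
    by_cases h : j = i
    · subst h
      simp [pderiv_X, Pi.single_apply]
    · simp [pderiv_X, Pi.single_apply, Ne.symm h, h]

lemma grad_zero_of_min (f : MvPolynomial (Fin n) ℝ) (xs : Fin n → ℝ)
    (hmin : ∀ x, eval xs f ≤ eval x f) (i : Fin n) :
    eval xs (pderiv i f) = 0 := by
  set q : Polynomial ℝ := aeval (fun j => Polynomial.C (xs j) +
      if j = i then Polynomial.X else 0) f with hq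
  have h0 : (fun j => xs j + if j = i then (0:ℝ) else 0) = xs := by
    funext j; by_cases h : j = i <;> simp [h]
  have hloc : IsLocalMin (fun t => Polynomial.eval t q) 0 := by
    have : ∀ t : ℝ, Polynomial.eval (0:ℝ) q ≤ Polynomial.eval t q := by
      intro t
      rw [hq, eval_line, eval_line, h0]
      exact hmin _
    exact Filter.Eventually.of_forall this
  have hderiv := hloc.deriv_eq_zero
  rw [Polynomial.deriv, hq, derivative_line, eval_line, h0] at hderiv
  exact hderiv

end Grad

lemma riesz_dirac {n : ℕ} (x : Fin n → ℝ) (h : MvPolynomial (Fin n) ℝ) :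
    riesz (fun α => ∏ j, x j ^ α j) h = eval x h := by
  rw [riesz, eval_eq']

lemma dirac_feasible (n k : ℕ) (f : MvPolynomial (Fin n) ℝ) (x : Fin n → ℝ)
    (hgrad : ∀ i, eval x (pderiv i f) = 0) :
    ndsFeasible n k f (fun α => ∏ j, x j ^ α j) := by
  refine ⟨by simp, ?_, ?_⟩
  · refine Matrix.PosSemidef.of_dotProduct_mulVec_nonneg ?_ ?_
    · ext a b
      simp [momMat, Matrix.conjTranspose_apply, add_comm]
    · intro v
      have hent : ∀ a b : Idx n (k/2), momMat n (k/2) (fun α => ∏ j, x j ^ α j) a b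
          = (∏ j, x j ^ a.1 j) * (∏ j, x j ^ b.1 j) := by
        intro a b
        simp only [momMat, Matrix.of_apply, Finsupp.add_apply, ← Finset.prod_mul_distrib,
          ← pow_add]
      have : (star v) ⬝ᵥ ((momMat n (k/2) (fun α => ∏ j, x j ^ α j)).mulVec v)
          = (∑ a : Idx n (k/2), v a * ∏ j, x j ^ a.1 j) ^ 2 := by
        simp only [dotProduct, Matrix.mulVec, dotProduct, star_trivial]
        rw [sq, Finset.sum_mul_sum]
        apply Finset.sum_congr rfl
        intro a _
        rw [Finset.mul_sum]
        apply Finset.sum_congr rfl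
        intro b _
        rw [hent]
        ring
      rw [this]
      positivity
  · intro i g hdeg
    rw [riesz_dirac, _root_.map_mul, hgrad i, mul_zero]

set_option maxHeartbeats 1000000 in
/-- suppose `deg f ≤ 2d−1`, `f` attains its global infimum, and `y` is an
optimal solution of the NDS relaxation `(P_{2d,NDS})`.  Write `M_d(y)` in block form
`[A, B; Bᵀ, C]` with `A = M_{d-1}(y)`, choose `W` with `B = AW`, and suppose the modified
moment matrix `M̃ := [A, B; Bᵀ, WᵀAW]` is generalized Hankel.  Then
`M̃ = Σᵢ λᵢ V_d(aᵢ)V_d(aᵢ)ᵀ` with `λᵢ > 0`, and if moreover all points `aᵢ` lie in the real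
gradient variety `V_f`, then `P* = P*_{2d,NDS}` and every `aᵢ` is a global minimizer. -/
theorem nds_optimality_from_hankel_modified_matrix (n d : ℕ) (hd : 1 ≤ d)
    (f : MvPolynomial (Fin n) ℝ) (hf : f.totalDegree ≤ 2 * d - 1)
    (hattain : ∃ xs : Fin n → ℝ, ((eval xs f : ℝ) : EReal) = globalOpt n f)
    (y : (Fin n →₀ ℕ) → ℝ) (hfeas : ndsFeasible n (2 * d) f y)
    (hopt : ((riesz y f : ℝ) : EReal) = ndsOpt n (2 * d) f)
    (B : Matrix (Idx n (d - 1)) (HIdx n d) ℝ)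
    (hB : B = Matrix.of fun a b => y (a.1 + b.1))
    (W : Matrix (Idx n (d - 1)) (HIdx n d) ℝ) (hW : B = momMat n (d - 1) y * W)
    (Mt : Matrix (Idx n (d - 1) ⊕ HIdx n d) (Idx n (d - 1) ⊕ HIdx n d) ℝ)
    (hMt : Mt = Matrix.fromBlocks (momMat n (d - 1) y) B Bᵀ (Wᵀ * momMat n (d - 1) y * W))
    (hHankel : ∀ a b a' b' : Idx n (d - 1) ⊕ HIdx n d,
      bDeg n (d - 1) d a + bDeg n (d - 1) d b = bDeg n (d - 1) d a' + bDeg n (d - 1) d b' →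
      Mt a b = Mt a' b') :
    ∃ (N : ℕ) (lam : Fin N → ℝ) (a : Fin N → (Fin n → ℝ)),
      (∀ i, 0 < lam i) ∧
      Mt = ∑ i, lam i • Matrix.vecMulVec
          (fun b => ∏ j, a i j ^ (bDeg n (d - 1) d b) j)
          (fun b => ∏ j, a i j ^ (bDeg n (d - 1) d b) j) ∧
      ((∀ i, ∀ j : Fin n, eval (a i) (pderiv j f) = 0) →
        globalOpt n f = ndsOpt n (2 * d) f ∧
        ∀ i, ((eval (a i) f : ℝ) : EReal) = globalOpt n f) := by
  classical
  obtain ⟨hy0, hMdPSD, hnds⟩ := hfeas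
  have h2d : (2 * d) / 2 = d := by omega
  rw [h2d] at hMdPSD
  have hA : (momMat n (d - 1) y).PosSemidef := by
    have h1 := hMdPSD.submatrix
      (fun β : Idx n (d - 1) => (⟨β.1, le_trans β.2 (Nat.sub_le d 1)⟩ : Idx n d))
    have h2 : momMat n (d - 1) y = (momMat n d y).submatrix
        (fun β : Idx n (d - 1) => (⟨β.1, le_trans β.2 (Nat.sub_le d 1)⟩ : Idx n d))
        (fun β : Idx n (d - 1) => (⟨β.1, le_trans β.2 (Nat.sub_le d 1)⟩ : Idx n d)) := rfl
    rw [h2]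
    exact h1
  obtain ⟨N, lam, a, hpos, hdec⟩ := flat_decomp n d hd y hA B W hW Mt hMt hHankel
  refine ⟨N, lam, a, hpos, hdec, ?_⟩
  intro hcrit
  -- reading off entries of `Mt`
  have hMtval : ∀ (β γ : Fin n →₀ ℕ) (hβ : (∑ j, β j) ≤ d - 1) (hγ : (∑ j, γ j) ≤ d),
      Mt (Sum.inl ⟨β, hβ⟩) (idxT n d γ hγ) = y (β + γ) := by
    intro β γ hβ hγ
    unfold idxT
    split
    · rw [hMt]
      simp [momMat]
    · rw [hMt]
      simp [hB]
  have hdecval : ∀ s t, Mt s t = ∑ k, lam k * ((∏ j, a k j ^ (bDeg n (d - 1) d s) j) *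
      (∏ j, a k j ^ (bDeg n (d - 1) d t) j)) := by
    intro s t
    rw [hdec, Matrix.sum_apply]
    exact Finset.sum_congr rfl fun k _ => by
      rw [Matrix.smul_apply, Matrix.vecMulVec_apply, smul_eq_mul]
  have hyval : ∀ γ : Fin n →₀ ℕ, (∑ j, γ j) ≤ 2 * d - 1 →
      y γ = ∑ k, lam k * ∏ j, a k j ^ γ j := by
    intro γ hγ
    obtain ⟨β, γ', hβ, hγ', hsum⟩ := split_deg hd γ hγ
    rw [← hsum, ← hMtval β γ' hβ hγ', hdecval]
    refine Finset.sum_congr rfl fun k _ => ?_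
    congr 1
    have hb1 : bDeg n (d - 1) d (Sum.inl (⟨β, hβ⟩ : Idx n (d - 1))) = β := rfl
    rw [hb1, bDeg_idxT, ← Finset.prod_mul_distrib]
    exact Finset.prod_congr rfl fun j _ => by rw [Finsupp.add_apply, pow_add]
  have hlam1 : (∑ k, lam k) = 1 := by
    have h0 := hyval 0 (by simp)
    rw [hy0] at h0
    simpa using h0.symm
  have hsupdeg : ∀ α ∈ f.support, (∑ j, α j) ≤ 2 * d - 1 := by
    intro α hα
    have h1 := MvPolynomial.le_totalDegree hα
    have h2 : (α.sum fun _ e => e) = ∑ j, α j := Finsupp.sum_fintype _ _ (fun _ => rfl)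
    omega
  have hriesz : riesz y f = ∑ k, lam k * eval (a k) f := by
    rw [riesz]
    calc ∑ α ∈ f.support, f.coeff α * y α
        = ∑ α ∈ f.support, ∑ k, lam k * (f.coeff α * ∏ j, a k j ^ α j) := by
          refine Finset.sum_congr rfl fun α hα => ?_
          rw [hyval α (hsupdeg α hα), Finset.mul_sum]
          exact Finset.sum_congr rfl fun k _ => by ring
      _ = ∑ k, ∑ α ∈ f.support, lam k * (f.coeff α * ∏ j, a k j ^ α j) := Finset.sum_comm
      _ = ∑ k, lam k * eval (a k) f := by
          refine Finset.sum_congr rfl fun k _ => ?_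
          rw [← Finset.mul_sum, MvPolynomial.eval_eq']
  obtain ⟨xs, hxs⟩ := hattain
  have hminxs : ∀ x : Fin n → ℝ, eval xs f ≤ eval x f := by
    intro x
    have h1 : globalOpt n f ≤ ((eval x f : ℝ) : EReal) := sInf_le ⟨x, rfl⟩
    rw [← hxs] at h1
    exact_mod_cast h1
  have hgradxs : ∀ i, eval xs (pderiv i f) = 0 := grad_zero_of_min f xs hminxs
  have hndsle : ∀ x : Fin n → ℝ, (∀ i, eval x (pderiv i f) = 0) →
      ndsOpt n (2 * d) f ≤ ((eval x f : ℝ) : EReal) := by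
    intro x hx
    have hfe := dirac_feasible n (2 * d) f x hx
    have h1 : ((riesz (fun α => ∏ j, x j ^ α j) f : ℝ) : EReal) ∈
        {v : EReal | ∃ y', ndsFeasible n (2 * d) f y' ∧ v = (riesz y' f : ℝ)} := ⟨_, hfe, rfl⟩
    have h2 := sInf_le h1
    rw [riesz_dirac] at h2
    exact h2
  have hRle : ∀ k, riesz y f ≤ eval (a k) f := by
    intro k
    have h1 := hndsle (a k) (hcrit k)
    rw [← hopt] at h1
    exact_mod_cast h1
  have hsum_eq : (∑ k, lam k * (eval (a k) f - riesz y f)) = 0 := by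
    have h1 : (∑ k, lam k * (eval (a k) f - riesz y f))
        = (∑ k, lam k * eval (a k) f) - (∑ k, lam k) * riesz y f := by
      rw [Finset.sum_mul, ← Finset.sum_sub_distrib]
      exact Finset.sum_congr rfl fun k _ => by ring
    rw [h1, hlam1, one_mul, ← hriesz, sub_self]
  have hevalR : ∀ k, eval (a k) f = riesz y f := by
    intro k
    have hz := (Finset.sum_eq_zero_iff_of_nonneg
      (fun k _ => mul_nonneg (le_of_lt (hpos k)) (sub_nonneg.mpr (hRle k)))).mp
      hsum_eq k (Finset.mem_univ k)
    rcases mul_eq_zero.mp hz with h | h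
    · exact absurd h (ne_of_gt (hpos k))
    · linarith [sub_eq_zero.mp h]
  have hNne : Nonempty (Fin N) := by
    by_contra hc
    have hN0 : N = 0 := by
      rcases Nat.eq_zero_or_pos N with h | h
      · exact h
      · exact absurd (Fin.pos_iff_nonempty.mp h) hc
    subst hN0
    simp at hlam1
  obtain ⟨k0⟩ := hNne
  have hglobal_le : globalOpt n f ≤ ((riesz y f : ℝ) : EReal) := by
    have h1 : globalOpt n f ≤ ((eval (a k0) f : ℝ) : EReal) := sInf_le ⟨a k0, rfl⟩
    rw [hevalR k0] at h1
    exact h1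
  have hnds_le_global : ndsOpt n (2 * d) f ≤ globalOpt n f := by
    rw [← hxs]
    exact hndsle xs hgradxs
  have hglobal_le_nds : globalOpt n f ≤ ndsOpt n (2 * d) f := by
    rw [← hopt]
    exact hglobal_le
  have hmain : globalOpt n f = ndsOpt n (2 * d) f :=
    le_antisymm hglobal_le_nds hnds_le_global
  refine ⟨hmain, ?_⟩
  intro k
  rw [hevalR k, hopt, ← hmain]
end
end
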